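/- Let λ > 0 be real, and let m be a positive integer with 2mλ ≥ √3. Then ∑_{j=m+1}^{∞} (4j²λ² − 1)·exp(−2j²λ²) ≤ ∫_m^∞ (4r²λ² − 1)·exp(−2r²λ²) dr = m·exp(−2m²λ²). -/

import Mathlib

/-!
`(4r²λ² − 1)·exp(−2r²λ²)` is the derivative of `−r·exp(−2r²λ²)`, which tends to `0` at infinity,
so its integral over `[m, ∞)` is `m·exp(−2m²λ²)`. Its own derivative is
`4rλ²(3 − 4r²λ²)·exp(−2r²λ²)`, so for `2mλ ≥ √3` it is nonnegative and antitone on `[m, ∞)`, and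
the tail sum is dominated by the integral as for any antitone function.
-/

open MeasureTheory Real Set Filter Topology

noncomputable def gaussWeight (l r : ℝ) : ℝ :=
  (4 * r ^ 2 * l ^ 2 - 1) * exp (-2 * r ^ 2 * l ^ 2)

lemma hasDerivAt_exp_neg_two_mul_sq_mul_sq (l x : ℝ) :
    HasDerivAt (fun r => exp (-2 * r ^ 2 * l ^ 2))
      (-4 * x * l ^ 2 * exp (-2 * x ^ 2 * l ^ 2)) x := by
  refine (((hasDerivAt_pow 2 x).const_mul (-2 : ℝ)).mul_const (l ^ 2)).exp.congr_deriv ?_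
  push_cast
  ring

lemma hasDerivAt_neg_mul_exp_eq_gaussWeight (l x : ℝ) :
    HasDerivAt (fun r => -r * exp (-2 * r ^ 2 * l ^ 2)) (gaussWeight l x) x := by
  refine ((hasDerivAt_neg x).mul (hasDerivAt_exp_neg_two_mul_sq_mul_sq l x)).congr_deriv ?_
  rw [gaussWeight]
  ring

lemma hasDerivAt_gaussWeight (l x : ℝ) :
    HasDerivAt (gaussWeight l)
      (4 * x * l ^ 2 * (3 - 4 * x ^ 2 * l ^ 2) * exp (-2 * x ^ 2 * l ^ 2)) x := by
  have hpoly := (((hasDerivAt_pow 2 x).const_mul (4 : ℝ)).mul_const (l ^ 2)).sub_const 1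
  refine (hpoly.mul (hasDerivAt_exp_neg_two_mul_sq_mul_sq l x)).congr_deriv ?_
  push_cast
  ring

lemma gaussWeight_nonneg {l x : ℝ} (h : 1 ≤ 4 * x ^ 2 * l ^ 2) : 0 ≤ gaussWeight l x :=
  mul_nonneg (by linarith) (exp_pos _).le

lemma antitoneOn_gaussWeight {l a : ℝ} (ha : 0 ≤ a) (h : 3 ≤ 4 * a ^ 2 * l ^ 2) :
    AntitoneOn (gaussWeight l) (Ici a) := by
  refine antitoneOn_of_deriv_nonpos (convex_Ici a)
    (fun x _ => (hasDerivAt_gaussWeight l x).continuousAt.continuousWithinAt)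
    (fun x _ => (hasDerivAt_gaussWeight l x).differentiableAt.differentiableWithinAt) ?_
  intro x hx
  rw [interior_Ici] at hx
  have hx0 : 0 ≤ x := ha.trans (hx.le)
  have hfactor : 3 - 4 * x ^ 2 * l ^ 2 ≤ 0 := by
    have : 4 * a ^ 2 * l ^ 2 ≤ 4 * x ^ 2 * l ^ 2 := by gcongr; exact hx.le
    linarith
  rw [(hasDerivAt_gaussWeight l x).deriv]
  exact mul_nonpos_of_nonpos_of_nonneg
    (mul_nonpos_of_nonneg_of_nonpos (by positivity) hfactor) (exp_pos _).le

lemma tendsto_mul_exp_neg_mul_sq_atTop {b : ℝ} (hb : 0 < b) :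
    Tendsto (fun x => x * exp (-b * x ^ 2)) atTop (𝓝 0) := by
  refine ((tendsto_rpow_abs_mul_exp_neg_mul_sq_cocompact hb 1).mono_left
    atTop_le_cocompact).congr' ?_
  filter_upwards [eventually_ge_atTop 0] with x hx
  rw [rpow_one, abs_of_nonneg hx]

lemma tendsto_neg_mul_exp_neg_two_mul_sq_mul_sq {l : ℝ} (hl : l ≠ 0) :
    Tendsto (fun r => -r * exp (-2 * r ^ 2 * l ^ 2)) atTop (𝓝 0) := by
  have hlim := (tendsto_mul_exp_neg_mul_sq_atTop (b := 2 * l ^ 2) (by positivity)).neg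
  rw [neg_zero] at hlim
  refine hlim.congr fun r => ?_
  ring_nf

lemma gaussWeight_nonneg_of_mem_Ioi {l a x : ℝ} (ha : 0 ≤ a) (h : 1 ≤ 4 * a ^ 2 * l ^ 2)
    (hx : x ∈ Ioi a) : 0 ≤ gaussWeight l x :=
  gaussWeight_nonneg (h.trans (by gcongr; exact hx.le))

lemma integrableOn_Ioi_gaussWeight {l a : ℝ} (ha : 0 ≤ a) (h : 1 ≤ 4 * a ^ 2 * l ^ 2) :
    IntegrableOn (gaussWeight l) (Ioi a) :=
  integrableOn_Ioi_deriv_of_nonneg' (fun x _ => hasDerivAt_neg_mul_exp_eq_gaussWeight l x)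
    (fun _ hx => gaussWeight_nonneg_of_mem_Ioi ha h hx)
    (tendsto_neg_mul_exp_neg_two_mul_sq_mul_sq (by rintro rfl; norm_num at h))

lemma integral_Ioi_gaussWeight {l a : ℝ} (ha : 0 ≤ a) (h : 1 ≤ 4 * a ^ 2 * l ^ 2) :
    ∫ r in Ioi a, gaussWeight l r = a * exp (-2 * a ^ 2 * l ^ 2) := by
  rw [integral_Ioi_of_hasDerivAt_of_tendsto' (fun x _ => hasDerivAt_neg_mul_exp_eq_gaussWeight l x)
    (integrableOn_Ioi_gaussWeight ha h)
    (tendsto_neg_mul_exp_neg_two_mul_sq_mul_sq (by rintro rfl; norm_num at h))]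
  ring

theorem stmt_11_general (l : ℝ) (m : ℕ)
    (h : Real.sqrt 3 ≤ 2 * m * l) :
    (∑' j : ℕ, (4 * ((m : ℝ) + 1 + j) ^ 2 * l ^ 2 - 1)
        * Real.exp (-2 * ((m : ℝ) + 1 + j) ^ 2 * l ^ 2))
      ≤ ∫ r in Set.Ici (m : ℝ), (4 * r ^ 2 * l ^ 2 - 1) * Real.exp (-2 * r ^ 2 * l ^ 2) ∧
    (∫ r in Set.Ici (m : ℝ), (4 * r ^ 2 * l ^ 2 - 1) * Real.exp (-2 * r ^ 2 * l ^ 2))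
      = m * Real.exp (-2 * (m : ℝ) ^ 2 * l ^ 2) := by
  have hm : (0 : ℝ) ≤ m := m.cast_nonneg
  have h3 : 3 ≤ 4 * (m : ℝ) ^ 2 * l ^ 2 := by
    have hsq := pow_le_pow_left₀ (sqrt_nonneg 3) h 2
    rw [sq_sqrt (by norm_num)] at hsq
    linarith
  have h1 : 1 ≤ 4 * (m : ℝ) ^ 2 * l ^ 2 := by linarith
  show (∑' j : ℕ, gaussWeight l (m + 1 + j)) ≤ ∫ r in Ici (m : ℝ), gaussWeight l r ∧
    ∫ r in Ici (m : ℝ), gaussWeight l r = m * exp (-2 * (m : ℝ) ^ 2 * l ^ 2)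
  rw [integral_Ici_eq_integral_Ioi]
  refine ⟨?_, integral_Ioi_gaussWeight hm h1⟩
  convert (antitoneOn_gaussWeight hm h3).tsum_comp_add_le_integral m
    (integrableOn_Ioi_gaussWeight hm h1)
    (fun _ hx => gaussWeight_nonneg_of_mem_Ioi hm h1 hx) using 4 with j
  push_cast
  ring

/-- Tail sum–integral comparison (upper bound): for `λ > 0` and a positive integer `m`
with `2mλ ≥ √3`, `∑_{j=m+1}^∞ v(j,λ) ≤ ∫_m^∞ v(r,λ) dr = m·exp(-2m²λ²)`. -/
theorem stmt_11 (l : ℝ) (hl : 0 < l) (m : ℕ) (hm : 0 < m)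
    (h : Real.sqrt 3 ≤ 2 * m * l) :
    (∑' j : ℕ, (4 * ((m : ℝ) + 1 + j) ^ 2 * l ^ 2 - 1)
        * Real.exp (-2 * ((m : ℝ) + 1 + j) ^ 2 * l ^ 2))
      ≤ ∫ r in Set.Ici (m : ℝ), (4 * r ^ 2 * l ^ 2 - 1) * Real.exp (-2 * r ^ 2 * l ^ 2) ∧
    (∫ r in Set.Ici (m : ℝ), (4 * r ^ 2 * l ^ 2 - 1) * Real.exp (-2 * r ^ 2 * l ^ 2))
      = m * Real.exp (-2 * (m : ℝ) ^ 2 * l ^ 2) :=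
  stmt_11_general l m h
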